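/- arXiv:2401.17080 — 4 statements merged into one kernel-verified Lean document; each statement's English description precedes it below -/
import Mathlib

section
/- Let φ, φ⁺ : ℝ → ℂ be continuously differentiable and fix s ∈ ℝ. Then for every smooth compactly supported ψ : ℝ → ℂ one has −∫_ℝ 𝔊(r,s)·(ψ(r) + r·ψ'(r)) dr = ∫_ℝ 𝔗(r,s)·ψ(r) dr. (That is, the distributional derivative r∂_r of r ↦ 𝔊(r,s) equals 𝔗(·,s), with no Dirac contribution.) -/
open MeasureTheory

/-- First identity of Lemma 3.3: the distributional derivative `r ∂_r` of the
glued kernel `𝔊(·,s)` equals the kernel `𝔗(·,s)`, with no Dirac contribution;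
stated weakly against smooth compactly supported test functions. -/
theorem rdr_of_G_kernel (φ φ' Φ Φ' : ℝ → ℂ)
    (hφ : ∀ x, HasDerivAt φ (φ' x) x) (hφ'c : Continuous φ')
    (hΦ : ∀ x, HasDerivAt Φ (Φ' x) x) (hΦ'c : Continuous Φ')
    (G T : ℝ → ℝ → ℂ)
    (hG : ∀ r s, G r s = if r ≤ s then φ r * Φ s else φ s * Φ r)
    (hT : ∀ r s, T r s = if r ≤ s then (r : ℂ) * φ' r * Φ s
                         else φ s * ((r : ℂ) * Φ' r))
    (s : ℝ) :
    ∀ ψ : ℝ → ℂ, ContDiff ℝ (⊤ : ℕ∞) ψ → HasCompactSupport ψ →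
      -∫ r : ℝ, G r s * (ψ r + (r : ℂ) * deriv ψ r)
        = ∫ r : ℝ, T r s * ψ r := by
  intro ψ hψ hψsupp
  set ψ' := deriv ψ with hψ'def
  have hψd : ∀ x, HasDerivAt ψ (ψ' x) x := fun x =>
    ((hψ.differentiable (by simp)) x).hasDerivAt
  have hψ'c : Continuous ψ' := hψ.continuous_deriv (by simp)
  have hψc : Continuous ψ := hψ.continuous
  have hφc : Continuous φ :=
    Differentiable.continuous fun x => (hφ x).differentiableAt
  have hΦc : Continuous Φ :=
    Differentiable.continuous fun x => (hΦ x).differentiableAt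
  obtain ⟨R, hR⟩ := hψsupp.isBounded.subset_closedBall 0
  set a := min s (-R) - 1 with ha
  set b := max s R + 1 with hb
  have has : a ≤ s := by
    have := min_le_left s (-R); simp only [ha]; linarith
  have hsb : s ≤ b := by
    have := le_max_left s R; simp only [hb]; linarith
  have hzero : ∀ x, x ∉ Set.Ioo a b → ψ x = 0 ∧ ψ' x = 0 := by
    intro x hx
    have hx' : x ∉ tsupport ψ := by
      intro hmem
      have h := hR hmem
      rw [Real.closedBall_eq_Icc] at h
      obtain ⟨h1, h2⟩ := h
      apply hx
      have h3 := min_le_right s (-R)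
      have h4 := le_max_right s R
      exact ⟨by simp only [ha]; linarith, by simp only [hb]; linarith⟩
    refine ⟨image_eq_zero_of_notMem_tsupport hx', ?_⟩
    by_contra h
    exact hx' (support_deriv_subset (by simpa [hψ'def] using h))
  have hu : ∀ x : ℝ, HasDerivAt (fun r : ℝ => (r : ℂ) * ψ r)
      (ψ x + (x : ℂ) * ψ' x) x := by
    intro x
    have h1 : HasDerivAt (fun r : ℝ => (r : ℂ)) 1 x := by
      simpa using (hasDerivAt_id x).ofReal_comp
    have h2 := h1.mul (hψd x); rw [one_mul] at h2; exact h2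
  set f₁ : ℝ → ℂ := fun r => (φ r * Φ s) * (ψ r + (r : ℂ) * ψ' r) with hf₁
  set f₂ : ℝ → ℂ := fun r => (φ s * Φ r) * (ψ r + (r : ℂ) * ψ' r) with hf₂
  set g₁ : ℝ → ℂ := fun r => (φ' r * Φ s) * ((r : ℂ) * ψ r) with hg₁
  set g₂ : ℝ → ℂ := fun r => (φ s * Φ' r) * ((r : ℂ) * ψ r) with hg₂
  have hf₁c : Continuous f₁ :=
    (hφc.mul continuous_const).mul (hψc.add (Complex.continuous_ofReal.mul hψ'c))
  have hf₂c : Continuous f₂ :=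
    (continuous_const.mul hΦc).mul (hψc.add (Complex.continuous_ofReal.mul hψ'c))
  have hg₁c : Continuous g₁ :=
    (hφ'c.mul continuous_const).mul (Complex.continuous_ofReal.mul hψc)
  have hg₂c : Continuous g₂ :=
    (continuous_const.mul hΦ'c).mul (Complex.continuous_ofReal.mul hψc)
  have hdisj : Disjoint (Set.Ioc a s) (Set.Ioc s b) := by
    apply Set.disjoint_left.2
    rintro x ⟨_, h2⟩ ⟨h3, _⟩; exact absurd h2 (not_le.2 h3)
  -- G integral splits
  have hG1 : (∫ r : ℝ, G r s * (ψ r + (r : ℂ) * ψ' r))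
      = (∫ r in a..s, f₁ r) + ∫ r in s..b, f₂ r := by
    have hout : ∀ x ∉ Set.Ioc a b, G x s * (ψ x + (x : ℂ) * ψ' x) = 0 := by
      intro x hx
      have hx' : x ∉ Set.Ioo a b := fun h => hx (Set.Ioo_subset_Ioc_self h)
      obtain ⟨h1, h2⟩ := hzero x hx'
      simp [h1, h2]
    rw [← setIntegral_eq_integral_of_forall_compl_eq_zero hout,
      ← Set.Ioc_union_Ioc_eq_Ioc has hsb]
    have hint1 : IntegrableOn (fun r => G r s * (ψ r + (r : ℂ) * ψ' r))
        (Set.Ioc a s) := by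
      refine (hf₁c.integrableOn_Ioc).congr_fun ?_ measurableSet_Ioc
      intro r hr; simp only [hG, hf₁]; rw [if_pos hr.2]
    have hint2 : IntegrableOn (fun r => G r s * (ψ r + (r : ℂ) * ψ' r))
        (Set.Ioc s b) := by
      refine (hf₂c.integrableOn_Ioc).congr_fun ?_ measurableSet_Ioc
      intro r hr; simp only [hG, hf₂]; rw [if_neg (not_le.2 hr.1)]
    rw [setIntegral_union hdisj measurableSet_Ioc hint1 hint2,
      intervalIntegral.integral_of_le has, intervalIntegral.integral_of_le hsb]
    congr 1
    · exact setIntegral_congr_fun measurableSet_Ioc fun r hr => by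
        simp only [hG, hf₁]; rw [if_pos hr.2]
    · exact setIntegral_congr_fun measurableSet_Ioc fun r hr => by
        simp only [hG, hf₂]; rw [if_neg (not_le.2 hr.1)]
  -- T integral splits
  have hT1 : (∫ r : ℝ, T r s * ψ r)
      = (∫ r in a..s, g₁ r) + ∫ r in s..b, g₂ r := by
    have hout : ∀ x ∉ Set.Ioc a b, T x s * ψ x = 0 := by
      intro x hx
      have hx' : x ∉ Set.Ioo a b := fun h => hx (Set.Ioo_subset_Ioc_self h)
      obtain ⟨h1, _⟩ := hzero x hx'
      simp [h1]
    rw [← setIntegral_eq_integral_of_forall_compl_eq_zero hout,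
      ← Set.Ioc_union_Ioc_eq_Ioc has hsb]
    have hint1 : IntegrableOn (fun r => T r s * ψ r) (Set.Ioc a s) := by
      refine (hg₁c.integrableOn_Ioc).congr_fun ?_ measurableSet_Ioc
      intro r hr; simp only [hT, hg₁]; rw [if_pos hr.2]; ring
    have hint2 : IntegrableOn (fun r => T r s * ψ r) (Set.Ioc s b) := by
      refine (hg₂c.integrableOn_Ioc).congr_fun ?_ measurableSet_Ioc
      intro r hr; simp only [hT, hg₂]; rw [if_neg (not_le.2 hr.1)]; ring
    rw [setIntegral_union hdisj measurableSet_Ioc hint1 hint2,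
      intervalIntegral.integral_of_le has, intervalIntegral.integral_of_le hsb]
    congr 1
    · exact setIntegral_congr_fun measurableSet_Ioc fun r hr => by
        simp only [hT, hg₁]; rw [if_pos hr.2]; ring
    · exact setIntegral_congr_fun measurableSet_Ioc fun r hr => by
        simp only [hT, hg₂]; rw [if_neg (not_le.2 hr.1)]; ring
  -- boundary vanishing
  have hψa : ψ a = 0 := (hzero a (by simp [Set.mem_Ioo])).1
  have hψb : ψ b = 0 := (hzero b (by simp [Set.mem_Ioo])).1
  -- FTC on [a, s]
  have ftc1 : (∫ r in a..s, g₁ r) + (∫ r in a..s, f₁ r)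
      = (φ s * Φ s) * ((s : ℂ) * ψ s) := by
    have hD : ∀ x ∈ Set.uIcc a s,
        HasDerivAt (fun r => (φ r * Φ s) * ((r : ℂ) * ψ r)) (g₁ x + f₁ x) x :=
      fun x _ => ((hφ x).mul_const (Φ s)).mul (hu x)
    have h := intervalIntegral.integral_eq_sub_of_hasDerivAt hD
      (((hg₁c.add hf₁c)).intervalIntegrable a s)
    rw [intervalIntegral.integral_add (hg₁c.intervalIntegrable a s)
      (hf₁c.intervalIntegrable a s)] at h
    rw [h, hψa]; ring
  -- FTC on [s, b]
  have ftc2 : (∫ r in s..b, g₂ r) + (∫ r in s..b, f₂ r)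
      = -((φ s * Φ s) * ((s : ℂ) * ψ s)) := by
    have hD : ∀ x ∈ Set.uIcc s b,
        HasDerivAt (fun r => (φ s * Φ r) * ((r : ℂ) * ψ r)) (g₂ x + f₂ x) x :=
      fun x _ => ((hΦ x).const_mul (φ s)).mul (hu x)
    have h := intervalIntegral.integral_eq_sub_of_hasDerivAt hD
      (((hg₂c.add hf₂c)).intervalIntegrable s b)
    rw [intervalIntegral.integral_add (hg₂c.intervalIntegrable s b)
      (hf₂c.intervalIntegrable s b)] at h
    rw [h, hψb]; ring
  rw [hG1, hT1]
  linear_combination -ftc1 - ftc2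
end

section
/- Let φ, φ⁺ : ℝ → ℂ be continuously differentiable and fix r ∈ ℝ. Then for every smooth compactly supported ψ : ℝ → ℂ one has −∫_ℝ 𝔊(r,s)·(ψ(s) + s·ψ'(s)) ds = ∫_ℝ 𝔗(s,r)·ψ(s) ds. (That is, the distributional derivative s∂_s of s ↦ 𝔊(r,s) equals s ↦ 𝔗(s,r), with no Dirac contribution.) -/
open MeasureTheory Set Filter

/-- Second identity of Lemma 3.3: the distributional derivative `s ∂_s` of the
glued kernel `𝔊(r,·)` equals `s ↦ 𝔗(s,r)`, with no Dirac contribution; stated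
weakly against smooth compactly supported test functions. -/
theorem sds_of_G_kernel (φ φ' Φ Φ' : ℝ → ℂ)
    (hφ : ∀ x, HasDerivAt φ (φ' x) x) (hφ'c : Continuous φ')
    (hΦ : ∀ x, HasDerivAt Φ (Φ' x) x) (hΦ'c : Continuous Φ')
    (G T : ℝ → ℝ → ℂ)
    (hG : ∀ r s, G r s = if r ≤ s then φ r * Φ s else φ s * Φ r)
    (hT : ∀ r s, T r s = if r ≤ s then (r : ℂ) * φ' r * Φ s
                         else φ s * ((r : ℂ) * Φ' r))
    (r : ℝ) :
    ∀ ψ : ℝ → ℂ, ContDiff ℝ (⊤ : ℕ∞) ψ → HasCompactSupport ψ →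
      -∫ s : ℝ, G r s * (ψ s + (s : ℂ) * deriv ψ s)
        = ∫ s : ℝ, T s r * ψ s := by
  intro ψ hψ hψc
  set ψ' := deriv ψ with hψ'def
  have hψd : ∀ x, HasDerivAt ψ (ψ' x) x := fun x =>
    (hψ.differentiable (by simp) x).hasDerivAt
  have hψcont : Continuous ψ := hψ.continuous
  have hψ'cont : Continuous ψ' := hψ.continuous_deriv (by simp)
  have hψ'c : HasCompactSupport ψ' := hψc.deriv
  have hφc : Continuous φ := continuous_iff_continuousAt.2 fun x => (hφ x).continuousAt
  have hΦc : Continuous Φ := continuous_iff_continuousAt.2 fun x => (hΦ x).continuousAt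
  have hsC : Continuous fun s : ℝ => (s : ℂ) := Complex.continuous_ofReal
  -- integrability helper
  have key : ∀ (c g : ℝ → ℂ), Continuous c → Continuous g → HasCompactSupport g →
      Integrable (fun s => c s * g s) := fun c g hc hg hgc =>
    (hc.mul hg).integrable_of_hasCompactSupport hgc.mul_left
  have htest : HasCompactSupport (fun s : ℝ => ψ s + (s : ℂ) * ψ' s) :=
    hψc.add hψ'c.mul_left
  have htestc : Continuous (fun s : ℝ => ψ s + (s : ℂ) * ψ' s) :=
    hψcont.add (hsC.mul hψ'cont)
  -- the pieces
  have hintA : Integrable (fun s => (φ s * Φ r) * (ψ s + (s : ℂ) * ψ' s)) :=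
    key _ _ (hφc.mul continuous_const) htestc htest
  have hintB : Integrable (fun s => (φ r * Φ s) * (ψ s + (s : ℂ) * ψ' s)) :=
    key _ _ (continuous_const.mul hΦc) htestc htest
  have hintJ1 : Integrable (fun s : ℝ => (s : ℂ) * φ' s * Φ r * ψ s) :=
    key _ _ (((hsC.mul hφ'c).mul continuous_const)) hψcont hψc
  have hintJ2 : Integrable (fun s : ℝ => φ r * ((s : ℂ) * Φ' s) * ψ s) :=
    key _ _ (continuous_const.mul (hsC.mul hΦ'c)) hψcont hψc
  -- eventually zero at ±∞
  have hψ0 : ψ =ᶠ[Filter.cocompact ℝ] 0 := by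
    have := hψc
    rwa [hasCompactSupport_iff_eventuallyEq, Filter.coclosedCompact_eq_cocompact] at this
  have hsderiv : ∀ x : ℝ, HasDerivAt (fun s : ℝ => (s : ℂ)) 1 x := by
    intro x
    simpa using (hasDerivAt_id x).ofReal_comp
  -- left-side integration by parts
  have hF₁ : ∀ x, HasDerivAt (fun s : ℝ => (s : ℂ) * (φ s * Φ r) * ψ s)
      ((φ x * Φ r) * (ψ x + (x : ℂ) * ψ' x) + (x : ℂ) * φ' x * Φ r * ψ x) x := by
    intro x
    have h := (((hsderiv x).mul ((hφ x).mul_const (Φ r))).mul (hψd x))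
    refine h.congr_deriv ?_
    simp only [Pi.mul_apply]
    ring
  have hF₂ : ∀ x, HasDerivAt (fun s : ℝ => (s : ℂ) * (φ r * Φ s) * ψ s)
      ((φ r * Φ x) * (ψ x + (x : ℂ) * ψ' x) + φ r * ((x : ℂ) * Φ' x) * ψ x) x := by
    intro x
    have h := (((hsderiv x).mul ((hΦ x).const_mul (φ r))).mul (hψd x))
    refine h.congr_deriv ?_
    simp only [Pi.mul_apply]
    ring
  have hT1 : Filter.Tendsto (fun s : ℝ => (s : ℂ) * (φ s * Φ r) * ψ s) Filter.atBot (nhds 0) := by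
    have : (fun s : ℝ => (s : ℂ) * (φ s * Φ r) * ψ s) =ᶠ[Filter.atBot] 0 := by
      filter_upwards [hψ0.filter_mono atBot_le_cocompact] with x hx
      simp [hx]
    exact Filter.Tendsto.congr' this.symm tendsto_const_nhds
  have hT2 : Filter.Tendsto (fun s : ℝ => (s : ℂ) * (φ r * Φ s) * ψ s) Filter.atTop (nhds 0) := by
    have : (fun s : ℝ => (s : ℂ) * (φ r * Φ s) * ψ s) =ᶠ[Filter.atTop] 0 := by
      filter_upwards [hψ0.filter_mono atTop_le_cocompact] with x hx
      simp [hx]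
    exact Filter.Tendsto.congr' this.symm tendsto_const_nhds
  have ibp₁ : ∫ s in Iic r, ((φ s * Φ r) * (ψ s + (s : ℂ) * ψ' s) + (s : ℂ) * φ' s * Φ r * ψ s)
      = (r : ℂ) * (φ r * Φ r) * ψ r - 0 := by
    refine integral_Iic_of_hasDerivAt_of_tendsto' (fun x _ => hF₁ x) ?_ hT1
    exact (hintA.add hintJ1).integrableOn
  have ibp₂ : ∫ s in Ioi r, ((φ r * Φ s) * (ψ s + (s : ℂ) * ψ' s) + φ r * ((s : ℂ) * Φ' s) * ψ s)
      = 0 - (r : ℂ) * (φ r * Φ r) * ψ r := by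
    refine integral_Ioi_of_hasDerivAt_of_tendsto' (fun x _ => hF₂ x) ?_ hT2
    exact (hintB.add hintJ2).integrableOn
  -- split the derivative integrals
  rw [MeasureTheory.integral_add hintA.integrableOn hintJ1.integrableOn] at ibp₁
  rw [MeasureTheory.integral_add hintB.integrableOn hintJ2.integrableOn] at ibp₂
  -- identify the integrands with G and T on each half line
  have hGleft : ∀ s ∈ Iic r, G r s * (ψ s + (s : ℂ) * ψ' s)
      = (φ s * Φ r) * (ψ s + (s : ℂ) * ψ' s) := by
    intro s hs
    rw [hG]
    by_cases h : r ≤ s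
    · have : s = r := le_antisymm hs h
      subst this
      simp [h]
    · simp [h]
  have hGright : ∀ s ∈ Ioi r, G r s * (ψ s + (s : ℂ) * ψ' s)
      = (φ r * Φ s) * (ψ s + (s : ℂ) * ψ' s) := by
    intro s hs
    rw [hG, if_pos (le_of_lt hs)]
  have hTleft : ∀ s ∈ Iic r, T s r * ψ s = (s : ℂ) * φ' s * Φ r * ψ s := by
    intro s hs
    rw [hT, if_pos (show s ≤ r from hs)]
  have hTright : ∀ s ∈ Ioi r, T s r * ψ s = φ r * ((s : ℂ) * Φ' s) * ψ s := by
    intro s hs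
    rw [hT, if_neg (not_le.2 (show r < s from hs))]
  -- rewrite both total integrals as sums over half lines
  have hGsplit : (∫ s : ℝ, G r s * (ψ s + (s : ℂ) * ψ' s))
      = (∫ s in Iic r, (φ s * Φ r) * (ψ s + (s : ℂ) * ψ' s))
        + ∫ s in Ioi r, (φ r * Φ s) * (ψ s + (s : ℂ) * ψ' s) := by
    rw [← intervalIntegral.integral_Iic_add_Ioi (b := r)
      (hintA.integrableOn.congr_fun (fun s hs => (hGleft s hs).symm) measurableSet_Iic)
      (hintB.integrableOn.congr_fun (fun s hs => (hGright s hs).symm) measurableSet_Ioi)]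
    rw [setIntegral_congr_fun measurableSet_Iic hGleft,
      setIntegral_congr_fun measurableSet_Ioi hGright]
  have hTsplit : (∫ s : ℝ, T s r * ψ s)
      = (∫ s in Iic r, (s : ℂ) * φ' s * Φ r * ψ s)
        + ∫ s in Ioi r, φ r * ((s : ℂ) * Φ' s) * ψ s := by
    rw [← intervalIntegral.integral_Iic_add_Ioi (b := r)
      (hintJ1.integrableOn.congr_fun (fun s hs => (hTleft s hs).symm) measurableSet_Iic)
      (hintJ2.integrableOn.congr_fun (fun s hs => (hTright s hs).symm) measurableSet_Ioi)]
    rw [setIntegral_congr_fun measurableSet_Iic hTleft,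
      setIntegral_congr_fun measurableSet_Ioi hTright]
  rw [hGsplit, hTsplit]
  linear_combination -ibp₁ - ibp₂
end

section
/- Let φ, φ⁺ : ℝ → ℂ be continuously differentiable and fix r ∈ ℝ. Then for every smooth compactly supported ψ : ℝ → ℂ one has −∫_ℝ 𝔗(r,s)·(ψ(s) + s·ψ'(s)) ds = ∫_ℝ 𝔔(r,s)·ψ(s) ds − r²·W(r)·ψ(r). (That is, in the sense of distributions, s∂_s r∂_r 𝔊(r,s) = 𝔔(r,s) − r²·W(r)·δ(r−s).) -/
open MeasureTheory Set Filter

/-- Third identity of Lemma 3.3: in the sense of distributions,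
`s∂_s r∂_r 𝔊(r,s) = 𝔔(r,s) − r²·W(r)·δ(r−s)`, i.e. the distributional
derivative `s ∂_s` of `s ↦ 𝔗(r,s)` equals `𝔔(r,·)` minus a Dirac term with
weight `r²·W(r)`; stated weakly against smooth compactly supported test
functions. -/
theorem sds_of_T_kernel (φ φ' Φ Φ' : ℝ → ℂ)
    (hφ : ∀ x, HasDerivAt φ (φ' x) x) (hφ'c : Continuous φ')
    (hΦ : ∀ x, HasDerivAt Φ (Φ' x) x) (hΦ'c : Continuous Φ')
    (G T Q : ℝ → ℝ → ℂ) (W : ℝ → ℂ)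
    (hG : ∀ r s, G r s = if r ≤ s then φ r * Φ s else φ s * Φ r)
    (hT : ∀ r s, T r s = if r ≤ s then (r : ℂ) * φ' r * Φ s
                         else φ s * ((r : ℂ) * Φ' r))
    (hQ : ∀ r s, Q r s = if r ≤ s then (r : ℂ) * φ' r * ((s : ℂ) * Φ' s)
                         else (s : ℂ) * φ' s * ((r : ℂ) * Φ' r))
    (hW : ∀ x, W x = φ x * Φ' x - φ' x * Φ x)
    (r : ℝ) :
    ∀ ψ : ℝ → ℂ, ContDiff ℝ (⊤ : ℕ∞) ψ → HasCompactSupport ψ →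
      -∫ s : ℝ, T r s * (ψ s + (s : ℂ) * deriv ψ s)
        = (∫ s : ℝ, Q r s * ψ s) - (r : ℂ) ^ 2 * W r * ψ r := by
  intro ψ hψ hψc
  have hφc : Continuous φ := continuous_iff_continuousAt.mpr fun s => (hφ s).continuousAt
  have hΦc : Continuous Φ := continuous_iff_continuousAt.mpr fun s => (hΦ s).continuousAt
  have hψcont : Continuous ψ := hψ.continuous
  have hψ'c : Continuous (deriv ψ) := hψ.continuous_deriv (by simp)
  set c₁ : ℂ := (r : ℂ) * Φ' r with hc₁
  set c₂ : ℂ := (r : ℂ) * φ' r with hc₂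
  -- `g s = s ψ s`, so that `g' s = ψ s + s ψ' s`
  have hψd : ∀ s, HasDerivAt ψ (deriv ψ s) s := fun s =>
    (hψ.differentiable (by simp) s).hasDerivAt
  have hgd : ∀ s : ℝ, HasDerivAt (fun s : ℝ => (s : ℂ) * ψ s)
      (ψ s + (s : ℂ) * deriv ψ s) s := by
    intro s
    have h1 : HasDerivAt (fun x : ℝ => (x : ℂ)) 1 s := by
      simpa using (hasDerivAt_id s).ofReal_comp
    exact (h1.mul (hψd s)).congr_deriv (by ring)
  have hgc : Continuous (fun s : ℝ => (s : ℂ) * ψ s) :=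
    Complex.continuous_ofReal.mul hψcont
  have hg'c : Continuous (fun s : ℝ => ψ s + (s : ℂ) * deriv ψ s) :=
    hψcont.add (Complex.continuous_ofReal.mul hψ'c)
  have hgcs : HasCompactSupport (fun s : ℝ => (s : ℂ) * ψ s) := hψc.mul_left
  have hg'cs : HasCompactSupport (fun s : ℝ => ψ s + (s : ℂ) * deriv ψ s) :=
    hψc.add (hψc.deriv.mul_left)
  -- the four pieces
  set w₁ : ℝ → ℂ := fun s => (φ' s * c₁) * ((s : ℂ) * ψ s) with hw₁
  set v₁ : ℝ → ℂ := fun s => (φ s * c₁) * (ψ s + (s : ℂ) * deriv ψ s) with hv₁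
  set w₂ : ℝ → ℂ := fun s => (c₂ * Φ' s) * ((s : ℂ) * ψ s) with hw₂
  set v₂ : ℝ → ℂ := fun s => (c₂ * Φ s) * (ψ s + (s : ℂ) * deriv ψ s) with hv₂
  set u₁ : ℝ → ℂ := fun s => (φ s * c₁) * ((s : ℂ) * ψ s) with hu₁
  set u₂ : ℝ → ℂ := fun s => (c₂ * Φ s) * ((s : ℂ) * ψ s) with hu₂
  have hu₁d : ∀ s, HasDerivAt u₁ (w₁ s + v₁ s) s := fun s =>
    ((hφ s).mul_const c₁).mul (hgd s)
  have hu₂d : ∀ s, HasDerivAt u₂ (w₂ s + v₂ s) s := fun s =>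
    ((hΦ s).const_mul c₂).mul (hgd s)
  -- integrability
  have hw₁i : Integrable w₁ :=
    (((hφ'c.mul continuous_const).mul hgc).integrable_of_hasCompactSupport hgcs.mul_left)
  have hv₁i : Integrable v₁ :=
    (((hφc.mul continuous_const).mul hg'c).integrable_of_hasCompactSupport hg'cs.mul_left)
  have hw₂i : Integrable w₂ :=
    (((continuous_const.mul hΦ'c).mul hgc).integrable_of_hasCompactSupport hgcs.mul_left)
  have hv₂i : Integrable v₂ :=
    (((continuous_const.mul hΦc).mul hg'c).integrable_of_hasCompactSupport hg'cs.mul_left)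
  -- limits at infinity
  have ht₁ : Tendsto u₁ atBot (nhds 0) :=
    (hgcs.mul_left : HasCompactSupport u₁).is_zero_at_infty.mono_left atBot_le_cocompact
  have ht₂ : Tendsto u₂ atTop (nhds 0) :=
    (hgcs.mul_left : HasCompactSupport u₂).is_zero_at_infty.mono_left atTop_le_cocompact
  -- fundamental theorem of calculus on each half-line
  have I1 : ∫ s in Iic r, (w₁ s + v₁ s) = u₁ r - 0 :=
    integral_Iic_of_hasDerivAt_of_tendsto' (fun x _ => hu₁d x)
      ((hw₁i.add hv₁i).integrableOn) ht₁
  have I2 : ∫ s in Ioi r, (w₂ s + v₂ s) = 0 - u₂ r :=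
    integral_Ioi_of_hasDerivAt_of_tendsto' (fun x _ => hu₂d x)
      ((hw₂i.add hv₂i).integrableOn) ht₂
  -- a.e. identifications of the integrands on each half-line
  have hne : ∀ᵐ s : ℝ, s ≠ r := by
    rw [ae_iff]; simpa using measure_singleton r
  have hae1 : v₁ =ᵐ[volume.restrict (Iic r)]
      fun s => T r s * (ψ s + (s : ℂ) * deriv ψ s) := by
    filter_upwards [ae_restrict_mem measurableSet_Iic, ae_restrict_of_ae hne] with s hmem hs
    have hlt : ¬ r ≤ s := not_le.mpr (lt_of_le_of_ne hmem hs)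
    simp only [hv₁, hT, if_neg hlt, hc₁]
  have hae2 : v₂ =ᵐ[volume.restrict (Ioi r)]
      fun s => T r s * (ψ s + (s : ℂ) * deriv ψ s) := by
    filter_upwards [ae_restrict_mem measurableSet_Ioi] with s hmem
    have hle : r ≤ s := le_of_lt hmem
    simp only [hv₂, hT, if_pos hle, hc₂]
  have hae3 : w₁ =ᵐ[volume.restrict (Iic r)] fun s => Q r s * ψ s := by
    filter_upwards [ae_restrict_mem measurableSet_Iic, ae_restrict_of_ae hne] with s hmem hs
    have hlt : ¬ r ≤ s := not_le.mpr (lt_of_le_of_ne hmem hs)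
    simp only [hw₁, hQ, if_neg hlt, hc₁]
    ring
  have hae4 : w₂ =ᵐ[volume.restrict (Ioi r)] fun s => Q r s * ψ s := by
    filter_upwards [ae_restrict_mem measurableSet_Ioi] with s hmem
    have hle : r ≤ s := le_of_lt hmem
    simp only [hw₂, hQ, if_pos hle, hc₂]
    ring
  -- split the integrals at r
  have hTsplit : ∫ s : ℝ, T r s * (ψ s + (s : ℂ) * deriv ψ s)
      = (∫ s in Iic r, T r s * (ψ s + (s : ℂ) * deriv ψ s))
        + ∫ s in Ioi r, T r s * (ψ s + (s : ℂ) * deriv ψ s) :=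
    (intervalIntegral.integral_Iic_add_Ioi (hv₁i.integrableOn.congr hae1)
      (hv₂i.integrableOn.congr hae2)).symm
  have hQsplit : ∫ s : ℝ, Q r s * ψ s
      = (∫ s in Iic r, Q r s * ψ s) + ∫ s in Ioi r, Q r s * ψ s :=
    (intervalIntegral.integral_Iic_add_Ioi (hw₁i.integrableOn.congr hae3)
      (hw₂i.integrableOn.congr hae4)).symm
  -- compute the half-line integrals
  have hsum1 : ∫ s in Iic r, (w₁ s + v₁ s)
      = (∫ s in Iic r, w₁ s) + ∫ s in Iic r, v₁ s :=
    integral_add hw₁i.integrableOn hv₁i.integrableOn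
  have hsum2 : ∫ s in Ioi r, (w₂ s + v₂ s)
      = (∫ s in Ioi r, w₂ s) + ∫ s in Ioi r, v₂ s :=
    integral_add hw₂i.integrableOn hv₂i.integrableOn
  have e1 : ∫ s in Iic r, T r s * (ψ s + (s : ℂ) * deriv ψ s)
      = u₁ r - 0 - ∫ s in Iic r, Q r s * ψ s := by
    rw [← integral_congr_ae hae1, ← integral_congr_ae hae3, ← I1, hsum1]; ring
  have e2 : ∫ s in Ioi r, T r s * (ψ s + (s : ℂ) * deriv ψ s)
      = 0 - u₂ r - ∫ s in Ioi r, Q r s * ψ s := by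
    rw [← integral_congr_ae hae2, ← integral_congr_ae hae4, ← I2, hsum2]; ring
  -- boundary term
  have hbd : u₁ r - u₂ r = (r : ℂ) ^ 2 * W r * ψ r := by
    simp only [hu₁, hu₂, hc₁, hc₂, hW]
    ring
  rw [hTsplit, e1, e2, hQsplit]
  rw [← hbd]
  ring
end

section
/- Let I ⊆ ℝ be an open interval, let q₁ : I → ℂ be twice continuously differentiable and nonvanishing, q₂ : I → ℂ continuously differentiable, and q₃ : I → ℂ continuous. Let φ, φ⁺ : ℝ → ℂ be twice continuously differentiable on I with q₁u'' + q₂u' + q₃u = 0 on I for u = φ and u = φ⁺, and suppose the Wronskian W(x) := φ(x)·(φ⁺)'(x) − φ'(x)·φ⁺(x) is nonvanishing on I. Fix s ∈ I and define G(r) := 𝔊(r,s)/(q₁(s)·W(s)). Then for every smooth ψ : ℝ → ℂ with compact support contained in I one has ∫_I G(r)·[(q₁·ψ)''(r) − (q₂·ψ)'(r) + q₃(r)·ψ(r)] dr = ψ(s). (That is, G is a distributional solution of q₁G'' + q₂G' + q₃G = δ(·−s) on I.) -/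
open Set MeasureTheory intervalIntegral

lemma parts_aux (α β : ℝ) (u u' u'' v v' v'' w w' g : ℝ → ℂ)
    (hu : ∀ x ∈ Set.uIcc α β, HasDerivAt u (u' x) x)
    (hu' : ∀ x ∈ Set.uIcc α β, HasDerivAt u' (u'' x) x)
    (hv : ∀ x ∈ Set.uIcc α β, HasDerivAt v (v' x) x)
    (hv' : ∀ x ∈ Set.uIcc α β, HasDerivAt v' (v'' x) x)
    (hw : ∀ x ∈ Set.uIcc α β, HasDerivAt w (w' x) x)
    (cu'' : ContinuousOn u'' (Set.uIcc α β))
    (cv'' : ContinuousOn v'' (Set.uIcc α β))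
    (cw' : ContinuousOn w' (Set.uIcc α β))
    (cg : ContinuousOn g (Set.uIcc α β))
    (hzero : ∀ x ∈ Set.uIcc α β, u'' x * v x + u' x * w x + u x * g x = 0) :
    ∫ x in α..β, u x * (v'' x - w' x + g x)
      = (u β * v' β - u' β * v β - u β * w β)
        - (u α * v' α - u' α * v α - u α * w α) := by
  have cu : ContinuousOn u (Set.uIcc α β) := fun x hx => (hu x hx).continuousAt.continuousWithinAt
  have cu' : ContinuousOn u' (Set.uIcc α β) := fun x hx => (hu' x hx).continuousAt.continuousWithinAt
  have cv : ContinuousOn v (Set.uIcc α β) := fun x hx => (hv x hx).continuousAt.continuousWithinAt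
  have cv' : ContinuousOn v' (Set.uIcc α β) := fun x hx => (hv' x hx).continuousAt.continuousWithinAt
  have cw : ContinuousOn w (Set.uIcc α β) := fun x hx => (hw x hx).continuousAt.continuousWithinAt
  have iu' : IntervalIntegrable u' volume α β := cu'.intervalIntegrable
  have iu'' : IntervalIntegrable u'' volume α β := cu''.intervalIntegrable
  have iv' : IntervalIntegrable v' volume α β := cv'.intervalIntegrable
  have iv'' : IntervalIntegrable v'' volume α β := cv''.intervalIntegrable
  have iw' : IntervalIntegrable w' volume α β := cw'.intervalIntegrable
  have step1 : ∫ x in α..β, u x * v'' x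
      = u β * v' β - u α * v' α - ∫ x in α..β, u' x * v' x :=
    integral_mul_deriv_eq_deriv_mul hu hv' iu' iv''
  have step2 : ∫ x in α..β, u' x * v' x
      = u' β * v β - u' α * v α - ∫ x in α..β, u'' x * v x :=
    integral_mul_deriv_eq_deriv_mul hu' hv iu'' iv'
  have step3 : ∫ x in α..β, u x * w' x
      = u β * w β - u α * w α - ∫ x in α..β, u' x * w x :=
    integral_mul_deriv_eq_deriv_mul hu hw iu' iw'
  have i1 : IntervalIntegrable (fun x => u x * v'' x) volume α β := (cu.mul cv'').intervalIntegrable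
  have i2 : IntervalIntegrable (fun x => u x * w' x) volume α β := (cu.mul cw').intervalIntegrable
  have i3 : IntervalIntegrable (fun x => u x * g x) volume α β := (cu.mul cg).intervalIntegrable
  have i4 : IntervalIntegrable (fun x => u'' x * v x) volume α β := (cu''.mul cv).intervalIntegrable
  have i5 : IntervalIntegrable (fun x => u' x * w x) volume α β := (cu'.mul cw).intervalIntegrable
  have h4 : ∫ x in α..β, u x * g x
      = (∫ x in α..β, -(u'' x * v x)) - ∫ x in α..β, u' x * w x := by
    have i4n : IntervalIntegrable (fun x => -(u'' x * v x)) volume α β := i4.neg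
    rw [← intervalIntegral.integral_sub i4n i5]
    apply intervalIntegral.integral_congr
    intro x hx
    have := hzero x hx
    simp only
    linear_combination this
  have expand : ∫ x in α..β, u x * (v'' x - w' x + g x)
      = ((∫ x in α..β, u x * v'' x) - ∫ x in α..β, u x * w' x) + ∫ x in α..β, u x * g x := by
    rw [← intervalIntegral.integral_sub i1 i2, ← intervalIntegral.integral_add (i1.sub i2) i3]
    apply intervalIntegral.integral_congr
    intro x hx
    simp only
    ring
  rw [expand, step1, step2, step3, h4, intervalIntegral.integral_neg]
  ring

/-- The 'gluing' formula for the outgoing modal Green's kernel: if `φ`, `φ⁺`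
are two solutions of `q₁ u'' + q₂ u' + q₃ u = 0` on the open interval `Ioo a b`
with nonvanishing Wronskian `W`, then for `s ∈ Ioo a b` the glued kernel
`G(r) = 𝔊(r,s)/(q₁(s)·W(s))` is a distributional solution of
`q₁ G'' + q₂ G' + q₃ G = δ(·−s)` on the interval: for every smooth `ψ`
compactly supported in the interval,
`∫ G·[(q₁ψ)'' − (q₂ψ)' + q₃ψ] = ψ(s)`. -/
theorem gluing_formula_green_kernel (a b : ℝ)
    (q₁ q₂ q₃ : ℝ → ℂ)
    (hq₁smooth : ContDiffOn ℝ 2 q₁ (Ioo a b))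
    (hq₁ne : ∀ x ∈ Ioo a b, q₁ x ≠ 0)
    (hq₂smooth : ContDiffOn ℝ 1 q₂ (Ioo a b))
    (hq₃cont : ContinuousOn q₃ (Ioo a b))
    (φ φ' φ'' Φ Φ' Φ'' : ℝ → ℂ)
    (hφ : ∀ x ∈ Ioo a b, HasDerivAt φ (φ' x) x)
    (hφ' : ∀ x ∈ Ioo a b, HasDerivAt φ' (φ'' x) x)
    (hφ''c : ContinuousOn φ'' (Ioo a b))
    (hΦ : ∀ x ∈ Ioo a b, HasDerivAt Φ (Φ' x) x)
    (hΦ' : ∀ x ∈ Ioo a b, HasDerivAt Φ' (Φ'' x) x)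
    (hΦ''c : ContinuousOn Φ'' (Ioo a b))
    (hODEφ : ∀ x ∈ Ioo a b, q₁ x * φ'' x + q₂ x * φ' x + q₃ x * φ x = 0)
    (hODEΦ : ∀ x ∈ Ioo a b, q₁ x * Φ'' x + q₂ x * Φ' x + q₃ x * Φ x = 0)
    (W : ℝ → ℂ) (hW : ∀ x, W x = φ x * Φ' x - φ' x * Φ x)
    (hWne : ∀ x ∈ Ioo a b, W x ≠ 0)
    (s : ℝ) (hs : s ∈ Ioo a b)
    (Gk : ℝ → ℝ → ℂ)
    (hGk : ∀ r t, Gk r t = if r ≤ t then φ r * Φ t else φ t * Φ r)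
    (Gr : ℝ → ℂ) (hGr : ∀ r, Gr r = Gk r s / (q₁ s * W s)) :
    ∀ ψ : ℝ → ℂ, ContDiff ℝ (⊤ : ℕ∞) ψ → HasCompactSupport ψ →
      tsupport ψ ⊆ Ioo a b →
      ∫ r in Ioo a b,
        Gr r * (iteratedDeriv 2 (fun x => q₁ x * ψ x) r
                  - deriv (fun x => q₂ x * ψ x) r + q₃ r * ψ r)
        = ψ s := by
  intro ψ hψ hψc hsupp
  set v : ℝ → ℂ := fun x => q₁ x * ψ x with hv_def
  set w : ℝ → ℂ := fun x => q₂ x * ψ x with hw_def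
  -- choose a compact exhaustion interval
  have hKc : IsCompact (insert s (tsupport ψ)) := hψc.insert s
  have hKne : (insert s (tsupport ψ)).Nonempty := ⟨s, mem_insert _ _⟩
  have hKsub : insert s (tsupport ψ) ⊆ Ioo a b := insert_subset hs hsupp
  obtain ⟨m, hmK, hm_le⟩ : ∃ m, m ∈ insert s (tsupport ψ) ∧
      ∀ x ∈ insert s (tsupport ψ), m ≤ x :=
    ⟨sInf _, hKc.sInf_mem hKne, fun x hx => csInf_le hKc.bddBelow hx⟩
  obtain ⟨M, hMK, hM_ge⟩ : ∃ M, M ∈ insert s (tsupport ψ) ∧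
      ∀ x ∈ insert s (tsupport ψ), x ≤ M :=
    ⟨sSup _, hKc.sSup_mem hKne, fun x hx => le_csSup hKc.bddAbove hx⟩
  have ham : a < m := (hKsub hmK).1
  have hMb : M < b := (hKsub hMK).2
  have hms : m ≤ s := hm_le s (mem_insert _ _)
  have hsM : s ≤ M := hM_ge s (mem_insert _ _)
  obtain ⟨a', haa', ha'm⟩ : ∃ a', a < a' ∧ a' < m := ⟨(a + m) / 2, by linarith, by linarith⟩
  obtain ⟨b', hMb', hb'b⟩ : ∃ b', M < b' ∧ b' < b := ⟨(M + b) / 2, by linarith, by linarith⟩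
  have ha's : a' ≤ s := le_of_lt (lt_of_lt_of_le ha'm hms)
  have hsb' : s ≤ b' := le_of_lt (lt_of_le_of_lt hsM hMb')
  have hsub : Icc a' b' ⊆ Ioo a b := fun x hx =>
    ⟨lt_of_lt_of_le haa' hx.1, lt_of_le_of_lt hx.2 hb'b⟩
  have hsubL : Set.uIcc a' s ⊆ Ioo a b := by
    rw [uIcc_of_le ha's]; exact fun x hx => hsub ⟨hx.1, le_trans hx.2 hsb'⟩
  have hsubR : Set.uIcc s b' ⊆ Ioo a b := by
    rw [uIcc_of_le hsb']; exact fun x hx => hsub ⟨le_trans ha's hx.1, hx.2⟩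
  have hsupp' : tsupport ψ ⊆ Ioo a' b' := fun x hx =>
    ⟨lt_of_lt_of_le ha'm (hm_le x (mem_insert_of_mem _ hx)),
     lt_of_le_of_lt (hM_ge x (mem_insert_of_mem _ hx)) hMb'⟩
  -- smoothness of v, w
  have hψ2 : ContDiffOn ℝ 2 ψ (Ioo a b) := (hψ.of_le (by exact WithTop.coe_le_coe.mpr (le_top : (2 : ℕ∞) ≤ ⊤))).contDiffOn
  have hψ1 : ContDiffOn ℝ 1 ψ (Ioo a b) := (hψ.of_le (by simp)).contDiffOn
  have hv2 : ContDiffOn ℝ 2 v (Ioo a b) := hq₁smooth.mul hψ2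
  have hw1 : ContDiffOn ℝ 1 w (Ioo a b) := hq₂smooth.mul hψ1
  have hv1d : ContDiffOn ℝ 1 (deriv v) (Ioo a b) :=
    hv2.deriv_of_isOpen isOpen_Ioo (by norm_num)
  have cv2 : ContinuousOn (deriv (deriv v)) (Ioo a b) :=
    hv1d.continuousOn_deriv_of_isOpen isOpen_Ioo (by norm_num)
  have cw1 : ContinuousOn (deriv w) (Ioo a b) :=
    hw1.continuousOn_deriv_of_isOpen isOpen_Ioo (by norm_num)
  have hvd : ∀ x ∈ Ioo a b, HasDerivAt v (deriv v x) x := fun x hx =>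
    ((hv2.differentiableOn (by norm_num)).differentiableAt (isOpen_Ioo.mem_nhds hx)).hasDerivAt
  have hvd' : ∀ x ∈ Ioo a b, HasDerivAt (deriv v) (deriv (deriv v) x) x := fun x hx =>
    ((hv1d.differentiableOn (by norm_num)).differentiableAt (isOpen_Ioo.mem_nhds hx)).hasDerivAt
  have hwd : ∀ x ∈ Ioo a b, HasDerivAt w (deriv w x) x := fun x hx =>
    ((hw1.differentiableOn (by norm_num)).differentiableAt (isOpen_Ioo.mem_nhds hx)).hasDerivAt
  have hiter : iteratedDeriv 2 v = deriv (deriv v) := by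
    rw [show (2 : ℕ) = 1 + 1 from rfl, iteratedDeriv_succ, iteratedDeriv_one]
  -- vanishing off the support
  have hz : deriv (0 : ℝ → ℂ) = 0 := by
    rw [show (0 : ℝ → ℂ) = fun _ : ℝ => (0 : ℂ) from rfl, deriv_const']
  have hvanish : ∀ x, x ∉ tsupport ψ →
      ψ x = 0 ∧ v x = 0 ∧ w x = 0 ∧ deriv v x = 0 ∧ deriv (deriv v) x = 0 ∧ deriv w x = 0 := by
    intro x hx
    rw [notMem_tsupport_iff_eventuallyEq] at hx
    have hv0 : v =ᶠ[nhds x] 0 := hx.mono fun y hy => by simp [hv_def, hy]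
    have hw0 : w =ᶠ[nhds x] 0 := hx.mono fun y hy => by simp [hw_def, hy]
    have hdv0 : deriv v =ᶠ[nhds x] 0 := by
      have := hv0.deriv; rwa [hz] at this
    have hddv0 : deriv (deriv v) x = 0 := by
      have := hdv0.deriv_eq; rwa [hz] at this
    have hdw0 : deriv w x = 0 := by
      have := hw0.deriv_eq; rwa [hz] at this
    exact ⟨hx.eq_of_nhds, hv0.eq_of_nhds, hw0.eq_of_nhds, hdv0.eq_of_nhds, hddv0, hdw0⟩
  rw [hiter]
  -- reduce to the interval [a', b']
  have hred : ∫ r in Ioo a b, Gr r * (deriv (deriv v) r - deriv w r + q₃ r * ψ r)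
      = ∫ r in Ioo a' b', Gr r * (deriv (deriv v) r - deriv w r + q₃ r * ψ r) := by
    apply setIntegral_eq_of_subset_of_forall_diff_eq_zero measurableSet_Ioo
    · exact fun x hx => hsub ⟨le_of_lt hx.1, le_of_lt hx.2⟩
    · intro x hx
      have hxn : x ∉ tsupport ψ := fun hmem => hx.2 (hsupp' hmem)
      obtain ⟨h1, h2, h3, h4, h5, h6⟩ := hvanish x hxn
      rw [h5, h1, h6]; ring
  rw [hred, ← integral_Ioc_eq_integral_Ioo,
    ← intervalIntegral.integral_of_le (le_trans ha's hsb')]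
  -- continuity facts
  have cψ : ContinuousOn ψ (Ioo a b) := hψ.continuous.continuousOn
  have cφ : ContinuousOn φ (Ioo a b) := fun x hx => (hφ x hx).continuousAt.continuousWithinAt
  have cΦ : ContinuousOn Φ (Ioo a b) := fun x hx => (hΦ x hx).continuousAt.continuousWithinAt
  have cE : ContinuousOn (fun r => deriv (deriv v) r - deriv w r + q₃ r * ψ r) (Ioo a b) :=
    (cv2.sub cw1).add (hq₃cont.mul cψ)
  -- the two pieces of the Green kernel
  have hGrL : ∀ r, r ≤ s → Gr r = φ r * (Φ s / (q₁ s * W s)) := by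
    intro r hr; rw [hGr, hGk, if_pos hr, mul_div_assoc]
  have hGrR : ∀ r, s ≤ r → Gr r = Φ r * (φ s / (q₁ s * W s)) := by
    intro r hr; rw [hGr, hGk]
    split_ifs with h
    · have hrs : r = s := le_antisymm h hr
      subst hrs; ring
    · ring
  -- interval integrability of the full integrand on each side
  have hIL : IntervalIntegrable
      (fun r => Gr r * (deriv (deriv v) r - deriv w r + q₃ r * ψ r)) volume a' s := by
    rw [intervalIntegrable_iff_integrableOn_Ioc_of_le ha's]
    have hc : ContinuousOn
        (fun r => (φ r * (Φ s / (q₁ s * W s))) *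
          (deriv (deriv v) r - deriv w r + q₃ r * ψ r)) (Icc a' s) :=
      ((cφ.mul continuousOn_const).mul cE).mono (fun x hx => hsubL (by rwa [uIcc_of_le ha's]))
    exact (hc.integrableOn_Icc.mono_set Ioc_subset_Icc_self).congr_fun
      (fun r hr => by rw [hGrL r hr.2]) measurableSet_Ioc
  have hIR : IntervalIntegrable
      (fun r => Gr r * (deriv (deriv v) r - deriv w r + q₃ r * ψ r)) volume s b' := by
    rw [intervalIntegrable_iff_integrableOn_Ioc_of_le hsb']
    have hc : ContinuousOn
        (fun r => (Φ r * (φ s / (q₁ s * W s))) *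
          (deriv (deriv v) r - deriv w r + q₃ r * ψ r)) (Icc s b') :=
      ((cΦ.mul continuousOn_const).mul cE).mono (fun x hx => hsubR (by rwa [uIcc_of_le hsb']))
    exact (hc.integrableOn_Icc.mono_set Ioc_subset_Icc_self).congr_fun
      (fun r hr => by rw [hGrR r (le_of_lt hr.1)]) measurableSet_Ioc
  rw [← intervalIntegral.integral_add_adjacent_intervals hIL hIR]
  -- rewrite each side with the smooth representative
  have hLeq : ∫ r in a'..s, Gr r * (deriv (deriv v) r - deriv w r + q₃ r * ψ r)
      = ∫ r in a'..s, (φ r * (Φ s / (q₁ s * W s))) *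
          (deriv (deriv v) r - deriv w r + q₃ r * ψ r) := by
    apply intervalIntegral.integral_congr
    intro r hr
    have hr' : r ∈ Icc a' s := by rwa [uIcc_of_le ha's] at hr
    simp only; rw [hGrL r hr'.2]
  have hReq : ∫ r in s..b', Gr r * (deriv (deriv v) r - deriv w r + q₃ r * ψ r)
      = ∫ r in s..b', (Φ r * (φ s / (q₁ s * W s))) *
          (deriv (deriv v) r - deriv w r + q₃ r * ψ r) := by
    apply intervalIntegral.integral_congr
    intro r hr
    have hr' : r ∈ Icc s b' := by rwa [uIcc_of_le hsb'] at hr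
    simp only; rw [hGrR r hr'.1]
  -- integration by parts on each side
  have hLval : ∫ r in a'..s, (φ r * (Φ s / (q₁ s * W s))) *
        (deriv (deriv v) r - deriv w r + q₃ r * ψ r)
      = ((φ s * (Φ s / (q₁ s * W s))) * deriv v s
          - (φ' s * (Φ s / (q₁ s * W s))) * v s
          - (φ s * (Φ s / (q₁ s * W s))) * w s)
        - ((φ a' * (Φ s / (q₁ s * W s))) * deriv v a'
          - (φ' a' * (Φ s / (q₁ s * W s))) * v a'
          - (φ a' * (Φ s / (q₁ s * W s))) * w a') := by
    apply parts_aux a' s _ (fun r => φ' r * (Φ s / (q₁ s * W s)))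
      (fun r => φ'' r * (Φ s / (q₁ s * W s))) v (deriv v) (deriv (deriv v)) w (deriv w)
      (fun r => q₃ r * ψ r)
      (fun x hx => (hφ x (hsubL hx)).mul_const _)
      (fun x hx => (hφ' x (hsubL hx)).mul_const _)
      (fun x hx => hvd x (hsubL hx))
      (fun x hx => hvd' x (hsubL hx))
      (fun x hx => hwd x (hsubL hx))
      (((hφ''c.mono hsubL)).mul continuousOn_const)
      (cv2.mono hsubL)
      (cw1.mono hsubL)
      ((hq₃cont.mono hsubL).mul (cψ.mono hsubL))
    intro x hx
    have hx' := hsubL hx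
    simp only [hv_def, hw_def]
    linear_combination ((Φ s / (q₁ s * W s)) * ψ x) * hODEφ x hx'
  have hRval : ∫ r in s..b', (Φ r * (φ s / (q₁ s * W s))) *
        (deriv (deriv v) r - deriv w r + q₃ r * ψ r)
      = ((Φ b' * (φ s / (q₁ s * W s))) * deriv v b'
          - (Φ' b' * (φ s / (q₁ s * W s))) * v b'
          - (Φ b' * (φ s / (q₁ s * W s))) * w b')
        - ((Φ s * (φ s / (q₁ s * W s))) * deriv v s
          - (Φ' s * (φ s / (q₁ s * W s))) * v s
          - (Φ s * (φ s / (q₁ s * W s))) * w s) := by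
    apply parts_aux s b' _ (fun r => Φ' r * (φ s / (q₁ s * W s)))
      (fun r => Φ'' r * (φ s / (q₁ s * W s))) v (deriv v) (deriv (deriv v)) w (deriv w)
      (fun r => q₃ r * ψ r)
      (fun x hx => (hΦ x (hsubR hx)).mul_const _)
      (fun x hx => (hΦ' x (hsubR hx)).mul_const _)
      (fun x hx => hvd x (hsubR hx))
      (fun x hx => hvd' x (hsubR hx))
      (fun x hx => hwd x (hsubR hx))
      (((hΦ''c.mono hsubR)).mul continuousOn_const)
      (cv2.mono hsubR)
      (cw1.mono hsubR)
      ((hq₃cont.mono hsubR).mul (cψ.mono hsubR))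
    intro x hx
    have hx' := hsubR hx
    simp only [hv_def, hw_def]
    linear_combination ((φ s / (q₁ s * W s)) * ψ x) * hODEΦ x hx'
  -- boundary vanishing
  have ha'n : a' ∉ tsupport ψ := fun h => lt_irrefl a' (hsupp' h).1
  have hb'n : b' ∉ tsupport ψ := fun h => lt_irrefl b' (hsupp' h).2
  obtain ⟨hψa', hva', hwa', hdva', -⟩ := hvanish a' ha'n
  obtain ⟨hψb', hvb', hwb', hdvb', -⟩ := hvanish b' hb'n
  rw [hLeq, hReq, hLval, hRval, hva', hwa', hdva', hvb', hwb', hdvb']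
  -- final algebra
  have hvs : v s = q₁ s * ψ s := rfl
  rw [hvs, hW s]
  have hq1s : q₁ s ≠ 0 := hq₁ne s hs
  have hWs : φ s * Φ' s - φ' s * Φ s ≠ 0 := by
    have := hWne s hs; rwa [hW s] at this
  field_simp
  have hWs' : -(Φ s * φ' s) + φ s * Φ' s ≠ 0 := by
    intro h; apply hWs; linear_combination h
  have key : (-(Φ s * φ' s) + φ s * Φ' s) * (-(Φ s * φ' s) + φ s * Φ' s)⁻¹ = 1 :=
    mul_inv_cancel₀ hWs'
  linear_combination (q₁ s * ψ s) * key
end
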